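/- arXiv:2102.08208 — 3 statements merged into one kernel-verified Lean document; each statement's English description precedes it below -/
import Mathlib

section
/- Let (Ω, ℱ, P) be a probability space, 𝒳 and 𝒴 standard Borel spaces, X : Ω → 𝒳 and Y₀, Y₁ : Ω → 𝒴 measurable. Let H be a real Hilbert space and φ : 𝒴 → H a bounded strongly measurable feature map such that the mean embedding map ρ ↦ ∫_𝒴 φ(y) dρ(y) (a Bochner integral) is injective on the set of Borel probability measures on 𝒴. Let ν₀(x) and ν₁(x) denote regular conditional distributions (disintegrations) of Y₀ given X = x and of Y₁ given X = x respectively, and let P_X be the law of X. Define t = ∫_𝒳 ‖ ∫φ dν₁(x) − ∫φ dν₀(x) ‖²_H dP_X(x). Then t = 0 if and only if ν₀(x) = ν₁(x) for P_X-almost every x ∈ 𝒳. -/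
open MeasureTheory ProbabilityTheory

/-- Lemma 4.3: for a bounded strongly measurable feature map whose mean embedding is
injective on probability measures (a characteristic kernel), the kernel conditional
discrepancy t = ∫ ‖∫φ dν₁(x) − ∫φ dν₀(x)‖² dP_X(x) vanishes if and only if the regular
conditional distributions of Y₀ and Y₁ given X coincide P_X-almost everywhere. -/
theorem kcd_eq_zero_iff_condDistrib_ae_eq
    {Ω 𝒳 𝒴 : Type*} [MeasurableSpace Ω]
    [MeasurableSpace 𝒳] [StandardBorelSpace 𝒳]
    [MeasurableSpace 𝒴] [StandardBorelSpace 𝒴] [Nonempty 𝒴]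
    (P : Measure Ω) [IsProbabilityMeasure P]
    (X : Ω → 𝒳) (Y₀ Y₁ : Ω → 𝒴)
    (hX : Measurable X) (hY₀ : Measurable Y₀) (hY₁ : Measurable Y₁)
    {H : Type*} [NormedAddCommGroup H] [InnerProductSpace ℝ H] [CompleteSpace H]
    (φ : 𝒴 → H) (hφm : StronglyMeasurable φ)
    (C : ℝ) (hφb : ∀ y, ‖φ y‖ ≤ C)
    (hinj : ∀ ρ₁ ρ₂ : Measure 𝒴, IsProbabilityMeasure ρ₁ → IsProbabilityMeasure ρ₂ →
      (∫ y, φ y ∂ρ₁) = (∫ y, φ y ∂ρ₂) → ρ₁ = ρ₂) :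
    (∫ x, ‖(∫ y, φ y ∂(condDistrib Y₁ X P x)) - (∫ y, φ y ∂(condDistrib Y₀ X P x))‖ ^ 2
        ∂(P.map X)) = 0
      ↔ ∀ᵐ x ∂(P.map X), condDistrib Y₀ X P x = condDistrib Y₁ X P x := by
  have hPX : IsProbabilityMeasure (P.map X) := Measure.isProbabilityMeasure_map hX.aemeasurable
  set f : 𝒳 → H := fun x =>
    (∫ y, φ y ∂(condDistrib Y₁ X P x)) - (∫ y, φ y ∂(condDistrib Y₀ X P x)) with hf
  have hm1 : StronglyMeasurable fun x => ∫ y, φ y ∂(condDistrib Y₁ X P x) :=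
    MeasureTheory.StronglyMeasurable.integral_kernel_prod_right
      (f := fun _ y => φ y) (hφm.comp_measurable measurable_snd)
  have hm0 : StronglyMeasurable fun x => ∫ y, φ y ∂(condDistrib Y₀ X P x) :=
    MeasureTheory.StronglyMeasurable.integral_kernel_prod_right
      (f := fun _ y => φ y) (hφm.comp_measurable measurable_snd)
  have hfm : StronglyMeasurable f := hm1.sub hm0
  have hgm : StronglyMeasurable fun x => ‖f x‖ ^ 2 := (hfm.norm.pow 2)
  have hfb : ∀ x, ‖f x‖ ≤ 2 * C := by
    intro x
    have hb : ∀ (κ : Measure 𝒴) [IsProbabilityMeasure κ], ‖∫ y, φ y ∂κ‖ ≤ C := by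
      intro κ _
      calc ‖∫ y, φ y ∂κ‖ ≤ ∫ y, ‖φ y‖ ∂κ := norm_integral_le_integral_norm _
        _ ≤ ∫ _, C ∂κ := by
            refine integral_mono_of_nonneg (Filter.Eventually.of_forall fun y => norm_nonneg _)
              (integrable_const C) (Filter.Eventually.of_forall hφb)
        _ = C := by simp
    calc ‖f x‖ ≤ ‖∫ y, φ y ∂(condDistrib Y₁ X P x)‖ + ‖∫ y, φ y ∂(condDistrib Y₀ X P x)‖ :=
          norm_sub_le _ _
      _ ≤ C + C := add_le_add (hb _) (hb _)
      _ = 2 * C := by ring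
  have hInt : Integrable (fun x => ‖f x‖ ^ 2) (P.map X) := by
    refine Integrable.mono' (integrable_const ((2 * C) ^ 2)) hgm.aestronglyMeasurable
      (Filter.Eventually.of_forall fun x => ?_)
    rw [Real.norm_eq_abs, abs_of_nonneg (by positivity)]
    exact pow_le_pow_left₀ (norm_nonneg _) (hfb x) 2
  rw [integral_eq_zero_iff_of_nonneg_ae
      (Filter.Eventually.of_forall fun x => by positivity) hInt]
  constructor
  · intro h
    filter_upwards [h] with x hx
    have hx' : f x = 0 := by
      have : ‖f x‖ = 0 := by
        have := pow_eq_zero_iff (n := 2) (by norm_num) |>.mp hx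
        exact this
      simpa using this
    have := hinj (condDistrib Y₀ X P x) (condDistrib Y₁ X P x)
      inferInstance inferInstance (by
        have := sub_eq_zero.mp hx'
        exact this.symm)
    exact this
  · intro h
    filter_upwards [h] with x hx
    simp [hf, hx]
end

section
/- In the setting of the closed-form lemma for Û_MMD (control sample (x⁰ᵢ, y⁰ᵢ)_{i=1}^{n₀}, treatment sample (x¹ᵢ, y¹ᵢ)_{i=1}^{n₁}, feature map φ : 𝒴 → H, kernels k₀, k₁, matrices W₀ = (K₀ + n₀λ⁰I)⁻¹, W₁ = (K₁ + n₁λ¹I)⁻¹ assumed to exist, Gram matrices L₀ = [⟨φ(y⁰ᵢ), φ(y⁰ⱼ)⟩], L₁ = [⟨φ(y¹ᵢ), φ(y¹ⱼ)⟩], L = [⟨φ(y⁰ᵢ), φ(y¹ⱼ)⟩], and estimators μ̂₀(x) = Σ_{i,j} k₀(x, x⁰ᵢ)(W₀)_{ij} φ(y⁰ⱼ), μ̂₁(x) = Σ_{i,j} k₁(x, x¹ᵢ)(W₁)_{ij} φ(y¹ⱼ)), let additionally x₁, …, xₙ ∈ 𝒳 be evaluation points and define the cross-kernel matrices K̃₀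 ∈ ℝ^{n×n₀} with (K̃₀)_{ij} = k₀(xᵢ, x⁰ⱼ) and K̃₁ ∈ ℝ^{n×n₁} with (K̃₁)_{ij} = k₁(xᵢ, x¹ⱼ). Then the test statistic t̂ = (1/n) Σ_{i=1}^{n} ‖μ̂₁(xᵢ) − μ̂₀(xᵢ)‖²_H satisfies t̂ = (1/n) Tr(K̃₀ W₀ L₀ W₀ᵀ K̃₀ᵀ) − (2/n) Tr(K̃₀ W₀ L W₁ᵀ K̃₁ᵀ) + (1/n) Tr(K̃₁ W₁ L₁ W₁ᵀ K̃₁ᵀ). -/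
open Matrix
open scoped BigOperators RealInnerProductSpace

/-- Lemma 4.4: closed-form expression for the empirical kernel conditional discrepancy
test statistic t̂ in terms of traces of products of kernel and Gram matrices. -/
theorem closed_form_KCD_statistic
    {H : Type*} [NormedAddCommGroup H] [InnerProductSpace ℝ H]
    {𝒳 𝒴 : Type*} (φ : 𝒴 → H) (k₀ k₁ : 𝒳 → 𝒳 → ℝ)
    (hk₀sym : ∀ a b, k₀ a b = k₀ b a) (hk₁sym : ∀ a b, k₁ a b = k₁ b a)
    (n₀ n₁ n : ℕ) (hn : 0 < n)
    (x0 : Fin n₀ → 𝒳) (y0 : Fin n₀ → 𝒴) (x1 : Fin n₁ → 𝒳) (y1 : Fin n₁ → 𝒴)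
    (xs : Fin n → 𝒳)
    (lam0 lam1 : ℝ) (hlam0 : 0 < lam0) (hlam1 : 0 < lam1)
    (K₀ : Matrix (Fin n₀) (Fin n₀) ℝ) (hK₀ : K₀ = Matrix.of fun i j => k₀ (x0 i) (x0 j))
    (K₁ : Matrix (Fin n₁) (Fin n₁) ℝ) (hK₁ : K₁ = Matrix.of fun i j => k₁ (x1 i) (x1 j))
    (hinv₀ : IsUnit (K₀ + ((n₀ : ℝ) * lam0) • (1 : Matrix (Fin n₀) (Fin n₀) ℝ)))
    (hinv₁ : IsUnit (K₁ + ((n₁ : ℝ) * lam1) • (1 : Matrix (Fin n₁) (Fin n₁) ℝ)))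
    (W₀ : Matrix (Fin n₀) (Fin n₀) ℝ)
    (hW₀ : W₀ = (K₀ + ((n₀ : ℝ) * lam0) • (1 : Matrix (Fin n₀) (Fin n₀) ℝ))⁻¹)
    (W₁ : Matrix (Fin n₁) (Fin n₁) ℝ)
    (hW₁ : W₁ = (K₁ + ((n₁ : ℝ) * lam1) • (1 : Matrix (Fin n₁) (Fin n₁) ℝ))⁻¹)
    (L₀ : Matrix (Fin n₀) (Fin n₀) ℝ) (hL₀ : L₀ = Matrix.of fun i j => ⟪φ (y0 i), φ (y0 j)⟫)
    (L₁ : Matrix (Fin n₁) (Fin n₁) ℝ) (hL₁ : L₁ = Matrix.of fun i j => ⟪φ (y1 i), φ (y1 j)⟫)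
    (L : Matrix (Fin n₀) (Fin n₁) ℝ) (hL : L = Matrix.of fun i j => ⟪φ (y0 i), φ (y1 j)⟫)
    (muhat0 : 𝒳 → H)
    (hmu0 : ∀ x, muhat0 x = ∑ i : Fin n₀, ∑ j : Fin n₀, (k₀ x (x0 i) * W₀ i j) • φ (y0 j))
    (muhat1 : 𝒳 → H)
    (hmu1 : ∀ x, muhat1 x = ∑ i : Fin n₁, ∑ j : Fin n₁, (k₁ x (x1 i) * W₁ i j) • φ (y1 j))
    (Ktil₀ : Matrix (Fin n) (Fin n₀) ℝ) (hKtil₀ : Ktil₀ = Matrix.of fun i j => k₀ (xs i) (x0 j))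
    (Ktil₁ : Matrix (Fin n) (Fin n₁) ℝ) (hKtil₁ : Ktil₁ = Matrix.of fun i j => k₁ (xs i) (x1 j)) :
    (1 / (n : ℝ)) * ∑ i : Fin n, ‖muhat1 (xs i) - muhat0 (xs i)‖ ^ 2
      = (1 / (n : ℝ)) * Matrix.trace (Ktil₀ * W₀ * L₀ * W₀ᵀ * Ktil₀ᵀ)
        - (2 / (n : ℝ)) * Matrix.trace (Ktil₀ * W₀ * L * W₁ᵀ * Ktil₁ᵀ)
        + (1 / (n : ℝ)) * Matrix.trace (Ktil₁ * W₁ * L₁ * W₁ᵀ * Ktil₁ᵀ) := by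
  -- collapse the double sums in the estimators
  have hmu0' : ∀ i : Fin n, muhat0 (xs i)
      = ∑ j : Fin n₀, ((Ktil₀ * W₀) i j) • φ (y0 j) := by
    intro i
    rw [hmu0, Finset.sum_comm]
    refine Finset.sum_congr rfl fun j _ => ?_
    rw [Matrix.mul_apply, Finset.sum_smul]
    refine Finset.sum_congr rfl fun a _ => ?_
    rw [hKtil₀]; rfl
  have hmu1' : ∀ i : Fin n, muhat1 (xs i)
      = ∑ j : Fin n₁, ((Ktil₁ * W₁) i j) • φ (y1 j) := by
    intro i
    rw [hmu1, Finset.sum_comm]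
    refine Finset.sum_congr rfl fun j _ => ?_
    rw [Matrix.mul_apply, Finset.sum_smul]
    refine Finset.sum_congr rfl fun a _ => ?_
    rw [hKtil₁]; rfl
  -- inner products of sums of scaled vectors
  have inner_expand : ∀ {m p : ℕ} (a : Fin m → ℝ) (b : Fin p → ℝ)
      (u : Fin m → H) (v : Fin p → H),
      ⟪∑ j, a j • u j, ∑ l, b l • v l⟫ = ∑ j, ∑ l, a j * ⟪u j, v l⟫ * b l := by
    intro m p a b u v
    rw [sum_inner]
    refine Finset.sum_congr rfl fun j _ => ?_
    rw [inner_sum]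
    refine Finset.sum_congr rfl fun l _ => ?_
    rw [real_inner_smul_left, real_inner_smul_right]; ring
  -- diagonal entries of products M * G * Nᵀ
  have trace_entry : ∀ {m p : ℕ} (M : Matrix (Fin n) (Fin m) ℝ)
      (G : Matrix (Fin m) (Fin p) ℝ) (N : Matrix (Fin n) (Fin p) ℝ) (i : Fin n),
      (M * G * Nᵀ) i i = ∑ j, ∑ l, M i j * G j l * N i l := by
    intro m p M G N i
    rw [Matrix.mul_apply, Finset.sum_comm]
    refine Finset.sum_congr rfl fun l _ => ?_
    rw [Matrix.mul_apply, Finset.sum_mul]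
    refine Finset.sum_congr rfl fun j _ => ?_
    rw [Matrix.transpose_apply]
  -- rewrite the traces
  have hA0 : Ktil₀ * W₀ * L₀ * W₀ᵀ * Ktil₀ᵀ
      = (Ktil₀ * W₀) * L₀ * (Ktil₀ * W₀)ᵀ := by
    rw [Matrix.transpose_mul]; simp only [Matrix.mul_assoc]
  have hA1 : Ktil₁ * W₁ * L₁ * W₁ᵀ * Ktil₁ᵀ
      = (Ktil₁ * W₁) * L₁ * (Ktil₁ * W₁)ᵀ := by
    rw [Matrix.transpose_mul]; simp only [Matrix.mul_assoc]
  have hAc : Ktil₀ * W₀ * L * W₁ᵀ * Ktil₁ᵀ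
      = (Ktil₀ * W₀) * L * (Ktil₁ * W₁)ᵀ := by
    rw [Matrix.transpose_mul]; simp only [Matrix.mul_assoc]
  have key : ∑ i : Fin n, ‖muhat1 (xs i) - muhat0 (xs i)‖ ^ 2
      = Matrix.trace ((Ktil₀ * W₀) * L₀ * (Ktil₀ * W₀)ᵀ)
        - 2 * Matrix.trace ((Ktil₀ * W₀) * L * (Ktil₁ * W₁)ᵀ)
        + Matrix.trace ((Ktil₁ * W₁) * L₁ * (Ktil₁ * W₁)ᵀ) := by
    rw [Matrix.trace, Matrix.trace, Matrix.trace]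
    simp only [Matrix.diag]
    rw [Finset.mul_sum, ← Finset.sum_sub_distrib, ← Finset.sum_add_distrib]
    refine Finset.sum_congr rfl fun i _ => ?_
    have h1 : ‖muhat1 (xs i) - muhat0 (xs i)‖ ^ 2
        = ‖muhat1 (xs i)‖ ^ 2 - 2 * ⟪muhat1 (xs i), muhat0 (xs i)⟫
          + ‖muhat0 (xs i)‖ ^ 2 := norm_sub_sq_real _ _
    have e1 : ‖muhat1 (xs i)‖ ^ 2 = ((Ktil₁ * W₁) * L₁ * (Ktil₁ * W₁)ᵀ) i i := by
      rw [← real_inner_self_eq_norm_sq, hmu1' i, inner_expand, trace_entry]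
      refine Finset.sum_congr rfl fun j _ => Finset.sum_congr rfl fun l _ => ?_
      rw [hL₁]; rfl
    have e0 : ‖muhat0 (xs i)‖ ^ 2 = ((Ktil₀ * W₀) * L₀ * (Ktil₀ * W₀)ᵀ) i i := by
      rw [← real_inner_self_eq_norm_sq, hmu0' i, inner_expand, trace_entry]
      refine Finset.sum_congr rfl fun j _ => Finset.sum_congr rfl fun l _ => ?_
      rw [hL₀]; rfl
    have ec : ⟪muhat1 (xs i), muhat0 (xs i)⟫
        = ((Ktil₀ * W₀) * L * (Ktil₁ * W₁)ᵀ) i i := by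
      rw [real_inner_comm, hmu0' i, hmu1' i, inner_expand, trace_entry]
      refine Finset.sum_congr rfl fun j _ => Finset.sum_congr rfl fun l _ => ?_
      rw [hL]; rfl
    rw [h1, e1, e0, ec]; ring
  rw [hA0, hA1, hAc, key]
  ring
end

section
/- Let H and K be real Hilbert spaces, ι : H → K a bounded linear operator with dense range, and b ∈ K. Let (λₙ) be a sequence of positive reals with λₙ → 0, and set x_{λₙ} = (ι*ι + λₙI)⁻¹ι*b. Let (Ω, ℱ, P) be a probability space and x̂ₙ : Ω → H random elements such that ‖x̂ₙ − x_{λₙ}‖_H → 0 in probability as n → ∞. Then ‖ι x̂ₙ − b‖_K → 0 in probability as n → ∞. -/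
/-!
Since `x_λ` solves the normal equations of the Tikhonov functional
`J_λ(y) = ‖ι y - b‖² + λ‖y‖²`, it minimises `J_λ`; hence `‖ι x_λ - b‖² ≤ ‖ι y - b‖² + λ‖y‖²`
for every `y`, and density of the range of `ι` makes the approximation error `ι x_{λₙ} - b`
tend to zero. The random part `ι (x̂ₙ - x_{λₙ})` tends to zero in probability because `ι` is
Lipschitz, and adding a deterministic null sequence preserves convergence in probability.
-/

open MeasureTheory Filter Topology RealInnerProductSpace

namespace MeasureTheory

variable {α ι E F : Type*} {m : MeasurableSpace α} {μ : Measure α} {l : Filter ι}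

theorem TendstoInMeasure.comp_lipschitzWith [PseudoEMetricSpace E] [PseudoEMetricSpace F]
    {f : ι → α → E} {g : α → E} (hfg : TendstoInMeasure μ f l g) {φ : E → F} {L : NNReal}
    (hφ : LipschitzWith L φ) :
    TendstoInMeasure μ (fun i x => φ (f i x)) l (fun x => φ (g x)) := by
  intro ε hε
  have hεL : 0 < ε / L := ENNReal.div_pos_iff.2 ⟨hε.ne', ENNReal.coe_ne_top⟩
  refine tendsto_of_tendsto_of_tendsto_of_le_of_le tendsto_const_nhds (hfg _ hεL)
    (fun _ => zero_le) fun i => measure_mono fun x hx => ?_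
  exact ENNReal.div_le_of_le_mul' (hx.trans (hφ _ _))

theorem TendstoInMeasure.add_tendsto_zero [SeminormedAddCommGroup E]
    {f : ι → α → E} {g : α → E} (hfg : TendstoInMeasure μ f l g) {c : ι → E}
    (hc : Tendsto c l (𝓝 0)) :
    TendstoInMeasure μ (fun i x => f i x + c i) l g := by
  rw [tendstoInMeasure_iff_norm] at hfg ⊢
  intro ε hε
  have hc_small : ∀ᶠ i in l, ‖c i‖ < ε / 2 :=
    (tendsto_zero_iff_norm_tendsto_zero.1 hc).eventually_lt_const (by positivity)
  refine tendsto_of_tendsto_of_tendsto_of_le_of_le' tendsto_const_nhds (hfg (ε / 2) (by positivity))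
    (Eventually.of_forall fun _ => zero_le) ?_
  filter_upwards [hc_small] with i hi
  refine measure_mono fun x hx => ?_
  have hsplit : ‖f i x + c i - g x‖ ≤ ‖f i x - g x‖ + ‖c i‖ := by
    rw [add_sub_right_comm]; exact norm_add_le _ _
  change ε / 2 ≤ ‖f i x - g x‖
  linarith [show ε ≤ ‖f i x + c i - g x‖ from hx]

end MeasureTheory

section Tikhonov

variable {H K : Type*} [NormedAddCommGroup H] [InnerProductSpace ℝ H] [CompleteSpace H]
  [NormedAddCommGroup K] [InnerProductSpace ℝ K] [CompleteSpace K]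

def tikhonov (ι : H →L[ℝ] K) (b : K) (t : ℝ) (y : H) : ℝ :=
  ‖ι y - b‖ ^ 2 + t * ‖y‖ ^ 2

theorem tikhonov_le_of_normal_equation {ι : H →L[ℝ] K} {b : K} {t : ℝ} (ht : 0 ≤ t) {x : H}
    (hx : ContinuousLinearMap.adjoint ι (ι x) + t • x = ContinuousLinearMap.adjoint ι b)
    (y : H) : tikhonov ι b t x ≤ tikhonov ι b t y := by
  set r := y - x
  have hy : y = x + r := (add_sub_cancel x y).symm
  have hresidual : ι y - b = (ι x - b) + ι r := by rw [hy, map_add]; abel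
  have hadj : ContinuousLinearMap.adjoint ι (ι x - b) = -(t • x) := by
    rw [map_sub, ← hx]; abel
  -- the cross terms cancel by the normal equations
  have hcross : ⟪ι x - b, ι r⟫ = -(t * ⟪x, r⟫) := by
    rw [← ContinuousLinearMap.adjoint_inner_left, hadj, inner_neg_left, real_inner_smul_left]
  have hJ : tikhonov ι b t y = tikhonov ι b t x + ‖ι r‖ ^ 2 + t * ‖r‖ ^ 2 := by
    unfold tikhonov
    rw [hresidual, norm_add_sq_real, hy, norm_add_sq_real, hcross]
    ring
  rw [hJ]
  nlinarith [sq_nonneg ‖ι r‖, mul_nonneg ht (sq_nonneg ‖r‖)]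

theorem tendsto_apply_sub_of_normal_equation {ι : H →L[ℝ] K} (hdense : DenseRange ι) (b : K)
    {lam : ℕ → ℝ} (hlam_nonneg : ∀ n, 0 ≤ lam n) (hlam : Tendsto lam atTop (𝓝 0)) {xlam : ℕ → H}
    (hxlam : ∀ n, ContinuousLinearMap.adjoint ι (ι (xlam n)) + lam n • xlam n
      = ContinuousLinearMap.adjoint ι b) :
    Tendsto (fun n => ι (xlam n) - b) atTop (𝓝 0) := by
  suffices hsq : Tendsto (fun n => ‖ι (xlam n) - b‖ ^ 2) atTop (𝓝 0) by
    rw [tendsto_zero_iff_norm_tendsto_zero]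
    simpa [Real.sqrt_sq (norm_nonneg _)] using hsq.sqrt
  refine tendsto_order.2 ⟨fun a ha => Eventually.of_forall fun n => ha.trans_le (by positivity),
    fun ε hε => ?_⟩
  obtain ⟨y, hy⟩ : ∃ y, ‖ι y - b‖ ^ 2 < ε / 2 :=
    hdense.exists_mem_open (s := {k | ‖k - b‖ ^ 2 < ε / 2})
      (isOpen_lt (by fun_prop) continuous_const) ⟨b, by simpa using half_pos hε⟩
  have hpenalty : ∀ᶠ n in atTop, lam n * ‖y‖ ^ 2 < ε / 2 := by
    have := hlam.mul_const (‖y‖ ^ 2)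
    rw [zero_mul] at this
    exact this.eventually_lt_const (half_pos hε)
  filter_upwards [hpenalty] with n hn
  have hmin := tikhonov_le_of_normal_equation (hlam_nonneg n) (hxlam n) y
  unfold tikhonov at hmin
  nlinarith [mul_nonneg (hlam_nonneg n) (sq_nonneg ‖xlam n‖)]

end Tikhonov

theorem ustat_regression_consistency_assembly_general
    {H K : Type*}
    [NormedAddCommGroup H] [InnerProductSpace ℝ H] [CompleteSpace H]
    [NormedAddCommGroup K] [InnerProductSpace ℝ K] [CompleteSpace K]
    (ι : H →L[ℝ] K) (hdense : DenseRange (⇑ι)) (b : K)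
    (lam : ℕ → ℝ) (hlampos : ∀ n, 0 < lam n)
    (hlam : Tendsto lam atTop (nhds 0))
    (xlam : ℕ → H)
    (hxlam : ∀ n, ContinuousLinearMap.adjoint ι (ι (xlam n)) + lam n • xlam n
      = ContinuousLinearMap.adjoint ι b)
    {Ω : Type*} [MeasurableSpace Ω] (P : Measure Ω)
    (xhat : ℕ → Ω → H)
    (hconv : TendstoInMeasure P (fun n ω => xhat n ω - xlam n) atTop (fun _ => (0 : H))) :
    TendstoInMeasure P (fun n ω => ι (xhat n ω) - b) atTop (fun _ => (0 : K)) := by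
  have happrox : Tendsto (fun n => ι (xlam n) - b) atTop (𝓝 0) :=
    tendsto_apply_sub_of_normal_equation hdense b (fun n => (hlampos n).le) hlam hxlam
  have hestim : TendstoInMeasure P (fun n ω => ι (xhat n ω - xlam n)) atTop (fun _ => 0) := by
    simpa using hconv.comp_lipschitzWith ι.lipschitz
  convert hestim.add_tendsto_zero happrox using 3 with n ω
  rw [map_sub]
  abel

/-- Assembly of the proof of Theorem 5.2 (universal consistency of U-statistic
regression): if ι has dense range, λₙ → 0 with λₙ > 0, x_{λₙ} = (ι*ι + λₙI)⁻¹ι*b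
(characterised by the normal equations), and the random elements x̂ₙ satisfy
‖x̂ₙ − x_{λₙ}‖ → 0 in probability, then ‖ιx̂ₙ − b‖ → 0 in probability. -/
theorem ustat_regression_consistency_assembly
    {H K : Type*}
    [NormedAddCommGroup H] [InnerProductSpace ℝ H] [CompleteSpace H]
    [NormedAddCommGroup K] [InnerProductSpace ℝ K] [CompleteSpace K]
    (ι : H →L[ℝ] K) (hdense : DenseRange (⇑ι)) (b : K)
    (lam : ℕ → ℝ) (hlampos : ∀ n, 0 < lam n)
    (hlam : Tendsto lam atTop (nhds 0))
    (xlam : ℕ → H)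
    (hxlam : ∀ n, ContinuousLinearMap.adjoint ι (ι (xlam n)) + lam n • xlam n
      = ContinuousLinearMap.adjoint ι b)
    {Ω : Type*} [MeasurableSpace Ω] (P : Measure Ω) [IsProbabilityMeasure P]
    (xhat : ℕ → Ω → H)
    (hconv : TendstoInMeasure P (fun n ω => xhat n ω - xlam n) atTop (fun _ => (0 : H))) :
    TendstoInMeasure P (fun n ω => ι (xhat n ω) - b) atTop (fun _ => (0 : K)) :=
  ustat_regression_consistency_assembly_general ι hdense b lam hlampos hlam xlam hxlam P xhat hconv
end
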